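/- Let k ≥ 2 be an integer and set s = (k+1)/(2k). Then 1/2 − √(s·(1−s)) = (1/2)·(1 − √(1 − 1/k²)), and for every t ∈ (0,1] the following equivalence holds: (t < s and 2·φ⁻(s,t) − 1 > 0) if and only if t < (1/2)·(1 − √(1 − 1/k²)). -/

import Mathlib

noncomputable section

/-- φ⁺(s,t) = s + t − 2st + 2√(st(1−s)(1−t)). -/
def phiPlus (s t : ℝ) : ℝ :=
  s + t - 2 * s * t + 2 * Real.sqrt (s * t * (1 - s) * (1 - t))

/-- φ⁻(s,t) = s + t − 2st − 2√(st(1−s)(1−t)). -/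
def phiMinus (s t : ℝ) : ℝ :=
  s + t - 2 * s * t - 2 * Real.sqrt (s * t * (1 - s) * (1 - t))

end

/-!
With `a = 2s − 1`, `b = 1 − 2t` and `c = 4√(st(1−s)(1−t))` one has `2φ⁻(s,t) − 1 = ab − c` and
`c² = (1 − a²)(1 − b²)`, so `(ab)² − c² = a² + b² − 1`. For `s > 1/2` the lower edge is therefore
positive exactly when `b > 0` and `b² > 1 − a² = 4s(1−s)`, i.e. when `t < 1/2 − √(s(1−s))`.
For `s = (k+1)/(2k)` one computes `4s(1−s) = 1 − 1/k²`, which gives the threshold `t_PPT`.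
-/

open Real

theorem two_mul_phiMinus_sub_one (s t : ℝ) :
    2 * phiMinus s t - 1 = (2 * s - 1) * (1 - 2 * t) - 4 * √(s * t * (1 - s) * (1 - t)) := by
  unfold phiMinus
  ring

theorem lt_mul_iff_of_sq_eq {a b c : ℝ} (ha : 0 < a) (hc : 0 ≤ c)
    (hc_sq : c ^ 2 = (1 - a ^ 2) * (1 - b ^ 2)) : c < a * b ↔ 0 < b ∧ 1 < a ^ 2 + b ^ 2 := by
  have h_diff : (a * b) ^ 2 - c ^ 2 = a ^ 2 + b ^ 2 - 1 := by rw [hc_sq]; ring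
  constructor
  · intro h
    have hb : 0 < b := pos_of_mul_pos_right (hc.trans_lt h) ha.le
    exact ⟨hb, by nlinarith⟩
  · rintro ⟨hb, hab⟩
    exact (pow_lt_pow_iff_left₀ hc (mul_pos ha hb).le two_ne_zero).mp (by linarith)

theorem two_mul_phiMinus_sub_one_pos_iff {s t : ℝ} (hs : 1 / 2 < s) (hs₁ : s ≤ 1)
    (ht₀ : 0 ≤ t) (ht₁ : t ≤ 1) :
    0 < 2 * phiMinus s t - 1 ↔ t < 1 / 2 - √(s * (1 - s)) := by
  have h_prod : 0 ≤ s * t * (1 - s) * (1 - t) :=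
    mul_nonneg (mul_nonneg (mul_nonneg (by linarith) ht₀) (by linarith)) (by linarith)
  have h_edge := lt_mul_iff_of_sq_eq (a := 2 * s - 1) (b := 1 - 2 * t)
    (c := 4 * √(s * t * (1 - s) * (1 - t))) (by linarith) (by positivity)
    (by rw [mul_pow, sq_sqrt h_prod]; ring)
  rw [two_mul_phiMinus_sub_one, sub_pos, h_edge]
  constructor
  · rintro ⟨hb, hab⟩
    have h_sqrt : √(s * (1 - s)) < (1 - 2 * t) / 2 :=
      (sqrt_lt' (by linarith)).mpr (by nlinarith)
    linarith
  · intro h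
    have h_sqrt : √(s * (1 - s)) < (1 - 2 * t) / 2 := by linarith
    have hb : 0 < 1 - 2 * t := by linarith [sqrt_nonneg (s * (1 - s))]
    exact ⟨hb, by nlinarith [(sqrt_lt' (by linarith)).mp h_sqrt]⟩

theorem lt_and_two_mul_phiMinus_sub_one_pos_iff {s t : ℝ} (hs : 1 / 2 < s) (hs₁ : s ≤ 1)
    (ht₀ : 0 ≤ t) (ht₁ : t ≤ 1) :
    (t < s ∧ 0 < 2 * phiMinus s t - 1) ↔ t < 1 / 2 - √(s * (1 - s)) := by
  rw [two_mul_phiMinus_sub_one_pos_iff hs hs₁ ht₀ ht₁]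
  refine ⟨And.right, fun h => ⟨?_, h⟩⟩
  linarith [sqrt_nonneg (s * (1 - s))]

theorem half_sub_sqrt_eq_half_mul_one_sub_sqrt {k : ℝ} (hk : k ≠ 0) :
    1 / 2 - √((k + 1) / (2 * k) * (1 - (k + 1) / (2 * k))) = 1 / 2 * (1 - √(1 - 1 / k ^ 2)) := by
  have h : 1 - 1 / k ^ 2 = 2 ^ 2 * ((k + 1) / (2 * k) * (1 - (k + 1) / (2 * k))) := by
    field_simp
    ring
  rw [h, sqrt_mul (x := 2 ^ 2) (by norm_num), sqrt_sq (by norm_num)]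
  ring

/-- the PPT threshold identity and equivalence. With s = (k+1)/(2k),
one has 1/2 − √(s(1−s)) = (1/2)(1 − √(1 − 1/k²)), and for t ∈ (0,1] positivity of the
lower edge 2φ⁻(s,t) − 1 together with t < s is equivalent to t < t_PPT. -/
theorem ppt_threshold (k : ℕ) (hk : 2 ≤ k) :
    (1 / 2 - Real.sqrt ((((k : ℝ) + 1) / (2 * (k : ℝ))) *
        (1 - ((k : ℝ) + 1) / (2 * (k : ℝ)))) =
      (1 / 2) * (1 - Real.sqrt (1 - 1 / (k : ℝ) ^ 2))) ∧
    (∀ t ∈ Set.Ioc (0 : ℝ) 1,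
      ((t < ((k : ℝ) + 1) / (2 * (k : ℝ)) ∧
          0 < 2 * phiMinus (((k : ℝ) + 1) / (2 * (k : ℝ))) t - 1) ↔
        t < (1 / 2) * (1 - Real.sqrt (1 - 1 / (k : ℝ) ^ 2)))) := by
  have hk_one : (1 : ℝ) ≤ k := by exact_mod_cast (by omega : 1 ≤ k)
  have h_threshold := half_sub_sqrt_eq_half_mul_one_sub_sqrt (k := (k : ℝ)) (by positivity)
  have hs : 1 / 2 < ((k : ℝ) + 1) / (2 * k) := by
    rw [lt_div_iff₀ (by positivity)]
    linarith
  have hs₁ : ((k : ℝ) + 1) / (2 * k) ≤ 1 := by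
    rw [div_le_one (by positivity)]
    linarith
  refine ⟨h_threshold, fun t ht => ?_⟩
  rw [← h_threshold]
  exact lt_and_two_mul_phiMinus_sub_one_pos_iff hs hs₁ ht.1.le ht.2
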